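/- arXiv:2108.12340 — 3 statements merged into one kernel-verified Lean document; each statement's English description precedes it below -/
import Mathlib

section
/- Let n ≥ 1 and let A ⊆ ℝ^n be a nonempty Borel set. Then the Hausdorff dimension of the product A × ℝ ⊆ ℝ^{n+1}, computed with respect to the parabolic distance, equals dim_H A + 2, where dim_H A is the Hausdorff dimension of A with respect to the Euclidean distance on ℝ^n. -/
open Set Metric MeasureTheory ENNReal Filter

noncomputable section

/-- Parabolic space: `ℝⁿ × ℝ` (space × time) with the parabolic distance. -/
def PP (n : ℕ) : Type := EuclideanSpace ℝ (Fin n) × ℝ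

namespace PP

variable {n : ℕ}

/-- Space coordinate. -/
def x (p : PP n) : EuclideanSpace ℝ (Fin n) := (show EuclideanSpace ℝ (Fin n) × ℝ from p).1

/-- Time coordinate. -/
def t (p : PP n) : ℝ := (show EuclideanSpace ℝ (Fin n) × ℝ from p).2

/-- The parabolic distance `max(|X−Y|, |t−s|^{1/2})`. -/
noncomputable instance : MetricSpace (PP n) where
  dist p q := max (dist p.x q.x) (Real.sqrt |p.t - q.t|)
  dist_self p := by simp
  dist_comm p q := by simp [dist_comm, abs_sub_comm]
  dist_triangle p q r := by
    apply max_le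
    · exact (dist_triangle p.x q.x r.x).trans
        (add_le_add (le_max_left _ _) (le_max_left _ _))
    · have h1 : Real.sqrt |p.t - r.t| ≤ Real.sqrt (|p.t - q.t| + |q.t - r.t|) :=
        Real.sqrt_le_sqrt (abs_sub_le _ _ _)
      have h2 : Real.sqrt (|p.t - q.t| + |q.t - r.t|)
          ≤ Real.sqrt |p.t - q.t| + Real.sqrt |q.t - r.t| := by
        have ha := Real.sq_sqrt (abs_nonneg (p.t - q.t))
        have hb := Real.sq_sqrt (abs_nonneg (q.t - r.t))
        have hs : |p.t - q.t| + |q.t - r.t|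
            ≤ (Real.sqrt |p.t - q.t| + Real.sqrt |q.t - r.t|) ^ 2 := by
          nlinarith [Real.sqrt_nonneg |p.t - q.t|, Real.sqrt_nonneg |q.t - r.t|]
        calc Real.sqrt (|p.t - q.t| + |q.t - r.t|)
            ≤ Real.sqrt ((Real.sqrt |p.t - q.t| + Real.sqrt |q.t - r.t|) ^ 2) :=
              Real.sqrt_le_sqrt hs
          _ = _ := Real.sqrt_sq (by positivity)
      exact (h1.trans h2).trans
        (add_le_add (le_max_right _ _) (le_max_right _ _))
  eq_of_dist_eq_zero := by
    intro p q h
    have hx : dist p.x q.x = 0 :=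
      le_antisymm (le_trans (le_max_left _ _) h.le) dist_nonneg
    have ht' : Real.sqrt |p.t - q.t| = 0 :=
      le_antisymm (le_trans (le_max_right _ _) h.le) (Real.sqrt_nonneg _)
    have ht : p.t = q.t := by
      have := (Real.sqrt_eq_zero (abs_nonneg _)).mp ht'
      exact sub_eq_zero.mp (abs_eq_zero.mp this)
    have hx' : p.x = q.x := by
      exact dist_eq_zero.mp hx
    exact Prod.ext hx' ht

instance : MeasurableSpace (PP n) := borel _

instance : BorelSpace (PP n) := ⟨rfl⟩

end PP

/-- A half-open parabolic `m`-adic cube with parameters `k` (generation),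
`j` (space indices), `jt` (time index). -/
def pcube (n m : ℕ) (k : ℤ) (j : Fin n → ℤ) (jt : ℤ) : Set (PP n) :=
  {p | (∀ i, p.x i ∈ Set.Ico ((j i : ℝ) * (m : ℝ) ^ (-k)) (((j i : ℝ) + 1) * (m : ℝ) ^ (-k))) ∧
    p.t ∈ Set.Ico ((jt : ℝ) * ((m : ℝ) ^ (-k)) ^ 2) (((jt : ℝ) + 1) * ((m : ℝ) ^ (-k)) ^ 2)}

/-- `Q` is a half-open parabolic `m`-adic cube of side length `ℓ`. -/
def IsPCube (n m : ℕ) (Q : Set (PP n)) (ℓ : ℝ) : Prop :=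
  ∃ (k : ℤ) (j : Fin n → ℤ) (jt : ℤ), ℓ = (m : ℝ) ^ (-k) ∧ Q = pcube n m k j jt

/-- The `ρ`-dimensional parabolic `m`-adic net content `M^ρ_δ`. -/
noncomputable def netContent (n m : ℕ) (ρ : ℝ) (δ : ℝ≥0∞) (E : Set (PP n)) : ℝ≥0∞ :=
  ⨅ (Q : ℕ → Set (PP n)) (ℓ : ℕ → ℝ) (_ : ∀ i, IsPCube n m (Q i) (ℓ i))
    (_ : ∀ i, ENNReal.ofReal (ℓ i) ≤ δ) (_ : E ⊆ ⋃ i, Q i),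
    ∑' i, ENNReal.ofReal (ℓ i) ^ ρ

/-- The `ρ`-dimensional Hausdorff pre-measure `H^ρ_δ` (parabolic Hausdorff content when
`δ = ∞`), in a general (e)metric space. -/
noncomputable def hContent {X : Type*} [EMetricSpace X] (ρ : ℝ) (δ : ℝ≥0∞) (E : Set X) : ℝ≥0∞ :=
  ⨅ (U : ℕ → Set X) (_ : ∀ i, EMetric.diam (U i) ≤ δ) (_ : E ⊆ ⋃ i, U i),
    ∑' i, EMetric.diam (U i) ^ ρ

end

/-! Upper bound: cover `A` by sets `Uᵢ` of diameter at most `ηᵢ` with `∑ ηᵢ ^ s` small. Each slab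
`Uᵢ × [a, a + 1]` is covered by about `ηᵢ⁻²` boxes `Uᵢ × [c, c + ηᵢ²]` of parabolic diameter `ηᵢ`,
so it contributes `O(ηᵢ ^ s)` to the `(s + 2)`-dimensional sum.

Lower bound: a cover of `A × T` by sets `tₘ` restricts on each time slice to a cover of `A`, and the
time projection of `tₘ` has length at most `diam tₘ ^ 2`. Integrating the slice sums over `T` gives
`μH[s] A * |T| ≤ μH[s + 2] (A × T)`, and `T = ℝ` makes the right side infinite as soon as
`μH[s] A ≠ 0`. -/

open scoped NNReal

lemma Real.Icc_subset_biUnion_Icc_add_mul (a b : ℝ) {h : ℝ} (hh : 0 < h) :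
    Icc a b ⊆ ⋃ j ∈ Finset.range (⌊(b - a) / h⌋₊ + 1), Icc (a + j * h) (a + j * h + h) := by
  rintro t ⟨hat, htb⟩
  have hq : 0 ≤ (t - a) / h := div_nonneg (sub_nonneg.2 hat) hh.le
  refine mem_iUnion₂.2 ⟨⌊(t - a) / h⌋₊, Finset.mem_range.2 (Nat.lt_succ_of_le ?_), ?_, ?_⟩
  · exact Nat.floor_le_floor (div_le_div_of_nonneg_right (by linarith) hh.le)
  · linarith [(le_div_iff₀ hh).1 (Nat.floor_le hq)]
  · linarith [(div_lt_iff₀ hh).1 (Nat.lt_floor_add_one ((t - a) / h))]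

lemma Nat.floor_one_div_add_one_mul_le {h : ℝ} (h0 : 0 < h) (h1 : h ≤ 1) :
    ((⌊1 / h⌋₊ + 1 : ℕ) : ℝ) * h ≤ 2 := by
  calc ((⌊1 / h⌋₊ + 1 : ℕ) : ℝ) * h ≤ (1 / h + 1) * h := by
        push_cast
        gcongr
        exact Nat.floor_le (by positivity)
    _ = 1 + h := by rw [add_mul, one_div_mul_cancel h0.ne', one_mul]
    _ ≤ 2 := by linarith

lemma iSup_nonempty_ediam_rpow {X : Type*} [PseudoEMetricSpace X] {d : ℝ} (hd : 0 < d)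
    (u : Set X) : (⨆ _ : u.Nonempty, ediam u ^ d) = ediam u ^ d := by
  rcases u.eq_empty_or_nonempty with rfl | hu
  · simp [hd]
  · exact iSup_pos hu

/-- The content at scale `r` in Mathlib's construction of `μH[d]`. Unlike `hContent` it is an
outer measure, so covers may be refined piece by piece. -/
noncomputable abbrev hausdorffPre {X : Type*} [EMetricSpace X] (d : ℝ) (r : ℝ≥0∞) :
    OuterMeasure X :=
  OuterMeasure.mkMetric'.pre (fun u => ediam u ^ d) r

section HausdorffDimension

variable {X Y : Type*} [EMetricSpace X] [MeasurableSpace X] [BorelSpace X]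
  [EMetricSpace Y] [MeasurableSpace Y] [BorelSpace Y]

lemma hausdorffMeasure_eq_iSup_hausdorffPre (d : ℝ) (s : Set X) :
    μH[d] s = ⨆ r > 0, hausdorffPre d r s := by
  rw [Measure.hausdorffMeasure, ← OuterMeasure.coe_mkMetric, OuterMeasure.mkMetric,
    OuterMeasure.mkMetric']
  simp only [OuterMeasure.iSup_apply]

lemma exists_cover_tsum_ediam_rpow_lt {d : ℝ} (hd : 0 < d) {s : Set X} {r c : ℝ≥0∞}
    (hr : 0 < r) (hc : μH[d] s < c) :
    ∃ u : ℕ → Set X, s ⊆ ⋃ i, u i ∧ (∀ i, ediam (u i) ≤ r) ∧ ∑' i, ediam (u i) ^ d < c := by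
  rw [Measure.hausdorffMeasure_apply] at hc
  simpa only [iInf_lt_iff, iSup_nonempty_ediam_rpow hd, exists_prop] using
    (le_iSup₂_of_le r hr le_rfl).trans_lt hc

theorem dimH_le_add_of_hausdorffMeasure_eq_zero {A : Set X} {E : Set Y} {c : ℝ≥0}
    (h : ∀ s : ℝ, 0 < s → μH[s] A = 0 → μH[s + c] E = 0) : dimH E ≤ dimH A + c := by
  refine dimH_le fun d hd => le_of_not_gt fun hlt => ?_
  have hcd : c < d := by exact_mod_cast le_add_self.trans_lt hlt
  have hA : μH[((d - c : ℝ≥0) : ℝ)] A = 0 :=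
    hausdorffMeasure_of_dimH_lt (by rwa [ENNReal.coe_sub, lt_tsub_iff_right])
  have hE := h _ (by simpa using hcd) hA
  rw [NNReal.coe_sub hcd.le, sub_add_cancel, hd] at hE
  exact ENNReal.top_ne_zero hE

theorem add_le_dimH_of_hausdorffMeasure_ne_zero {A : Set X} {E : Set Y} (hA : A.Nonempty)
    {c : ℝ≥0} (h : ∀ s : ℝ, 0 ≤ s → μH[s] A ≠ 0 → μH[s + c] E ≠ 0) :
    dimH A + c ≤ dimH E := by
  refine ENNReal.le_of_forall_nnreal_lt fun d hd => ?_
  have hA' : μH[((d - c : ℝ≥0) : ℝ)] A ≠ 0 := by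
    rcases le_or_gt d c with hdc | hcd
    · rw [tsub_eq_zero_of_le hdc, NNReal.coe_zero]
      exact (one_pos.trans_le (Measure.one_le_hausdorffMeasure_zero_of_nonempty hA)).ne'
    · rw [hausdorffMeasure_of_lt_dimH]
      · exact ENNReal.top_ne_zero
      · rwa [ENNReal.coe_sub,
          ENNReal.sub_lt_iff_lt_right ENNReal.coe_ne_top (by exact_mod_cast hcd.le)]
  have hE := h _ (NNReal.coe_nonneg _) hA'
  rw [← NNReal.coe_add] at hE
  exact (ENNReal.coe_le_coe.2 le_tsub_add).trans (le_dimH_of_hausdorffMeasure_ne_zero hE)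

end HausdorffDimension

namespace PP

variable {n : ℕ}

def mk (x : EuclideanSpace ℝ (Fin n)) (t : ℝ) : PP n :=
  show EuclideanSpace ℝ (Fin n) × ℝ from (x, t)

def prod (S : Set (EuclideanSpace ℝ (Fin n))) (T : Set ℝ) : Set (PP n) :=
  PP.x ⁻¹' S ∩ PP.t ⁻¹' T

lemma edist_eq (p q : PP n) :
    edist p q = max (edist p.x q.x) (edist p.t q.t ^ (2⁻¹ : ℝ)) := by
  rw [edist_dist, edist_dist, edist_dist, Real.dist_eq,
    ENNReal.ofReal_rpow_of_nonneg (abs_nonneg _) (by norm_num), ← one_div, ← Real.sqrt_eq_rpow,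
    ← ENNReal.ofReal_max]
  rfl

lemma isometry_mk (τ : ℝ) : Isometry fun x : EuclideanSpace ℝ (Fin n) => mk x τ :=
  Isometry.of_dist_eq fun x y => by
    show max (dist x y) (Real.sqrt |τ - τ|) = dist x y
    simp

lemma holderWith_t : HolderWith 1 2 (PP.t : PP n → ℝ) := fun p q => by
  rw [ENNReal.coe_one, one_mul, NNReal.coe_ofNat,
    ← ENNReal.rpow_inv_rpow two_ne_zero (edist p.t q.t)]
  exact ENNReal.rpow_le_rpow ((edist_eq p q).ge.trans' (le_max_right _ _)) zero_le_two

lemma ediam_prod_le (S : Set (EuclideanSpace ℝ (Fin n))) (T : Set ℝ) :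
    ediam (prod S T) ≤ max (ediam S) (ediam T ^ (2⁻¹ : ℝ)) :=
  ediam_le fun p hp q hq => (edist_eq p q).trans_le <|
    max_le_max (edist_le_ediam_of_mem hp.1 hq.1)
      (ENNReal.rpow_le_rpow (edist_le_ediam_of_mem hp.2 hq.2) (by norm_num))

lemma ediam_prod_Icc_le {U : Set (EuclideanSpace ℝ (Fin n))} {η : ℝ≥0∞} (hη : η ≠ ⊤)
    (hU : ediam U ≤ η) (c : ℝ) : ediam (prod U (Icc c (c + η.toReal ^ 2))) ≤ η := by
  refine (ediam_prod_le _ _).trans (max_le hU (le_of_eq ?_))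
  rw [Real.ediam_Icc, add_sub_cancel_left, ← Real.rpow_two, ← ENNReal.ofReal_rpow_of_nonneg
    ENNReal.toReal_nonneg zero_le_two, ENNReal.ofReal_toReal hη, ENNReal.rpow_rpow_inv two_ne_zero]

lemma ediam_preimage_mk_le (U : Set (PP n)) (τ : ℝ) : ediam ((mk · τ) ⁻¹' U) ≤ ediam U := by
  rw [← (isometry_mk τ).ediam_image]
  exact ediam_mono (image_preimage_subset _ _)

lemma volume_closure_image_t_le (U : Set (PP n)) :
    volume (closure (PP.t '' U)) ≤ ediam U ^ (2 : ℝ) := by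
  refine (Real.volume_le_diam _).trans ?_
  rw [ediam_closure]
  simpa using holderWith_t.ediam_image_le U

lemma hausdorffPre_prod_Icc_le {s : ℝ} (hs : 0 ≤ s) {U : Set (EuclideanSpace ℝ (Fin n))}
    {η r : ℝ≥0∞} (hη0 : 0 < η) (hη1 : η ≤ 1) (hU : ediam U ≤ η) (hηr : η ≤ r) (a : ℝ) :
    hausdorffPre (s + 2) r (prod U (Icc a (a + 1))) ≤ 2 * η ^ s := by
  have hηtop : η ≠ ⊤ := (hη1.trans_lt ENNReal.one_lt_top).ne
  set h : ℝ := η.toReal ^ 2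
  have hh : 0 < h := pow_pos (ENNReal.toReal_pos hη0.ne' hηtop) 2
  have hpiece (j : ℕ) : ediam (prod U (Icc (a + j * h) (a + j * h + h))) ≤ η :=
    ediam_prod_Icc_le hηtop hU _
  set N : ℕ := ⌊1 / h⌋₊ + 1
  have hNh : (N : ℝ≥0∞) * η ^ (2 : ℝ) ≤ 2 := by
    rw [← ENNReal.ofReal_toReal hηtop, ENNReal.ofReal_rpow_of_nonneg ENNReal.toReal_nonneg
      zero_le_two, Real.rpow_two, ← ENNReal.ofReal_natCast, ← ENNReal.ofReal_mul (by positivity)]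
    refine ENNReal.ofReal_le_of_le_toReal ?_
    exact Nat.floor_one_div_add_one_mul_le hh (pow_le_one₀ ENNReal.toReal_nonneg
      (ENNReal.toReal_le_of_le_ofReal zero_le_one (by simpa using hη1)))
  have hcover := Real.Icc_subset_biUnion_Icc_add_mul a (a + 1) hh
  rw [add_sub_cancel_left] at hcover
  calc hausdorffPre (s + 2) r (prod U (Icc a (a + 1)))
      ≤ ∑ j ∈ Finset.range N,
          hausdorffPre (s + 2) r (prod U (Icc (a + j * h) (a + j * h + h))) := by
        refine (measure_mono fun p hp => ?_).trans (measure_biUnion_finset_le _ _)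
        obtain ⟨j, hj, hpj⟩ := mem_iUnion₂.1 (hcover hp.2)
        exact mem_iUnion₂.2 ⟨j, hj, hp.1, hpj⟩
    _ ≤ ∑ _j ∈ Finset.range N, η ^ (s + 2) := Finset.sum_le_sum fun j _ =>
        (OuterMeasure.mkMetric'.pre_le ((hpiece j).trans hηr)).trans
          (ENNReal.rpow_le_rpow (hpiece j) (by linarith))
    _ = (N * η ^ (2 : ℝ)) * η ^ s := by
        rw [Finset.sum_const, Finset.card_range, nsmul_eq_mul,
          ENNReal.rpow_add_of_nonneg _ _ hs zero_le_two]
        ring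
    _ ≤ 2 * η ^ s := by gcongr

lemma hausdorffPre_prod_Icc_le_add {s : ℝ} (hs : 0 < s) {U : Set (EuclideanSpace ℝ (Fin n))}
    {r ε : ℝ≥0∞} (hr : 0 < r) (hU : ediam U ≤ min r 1) (hε : 0 < ε) (a : ℝ) :
    hausdorffPre (s + 2) r (prod U (Icc a (a + 1))) ≤ 2 * (ediam U ^ s + ε) := by
  -- `η` keeps the box height away from `0` (a point of `U` would otherwise need infinitely
  -- many boxes) at an `s`-cost of at most `ε`.
  set η := max (ediam U) (min (min r 1) (ε ^ s⁻¹))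
  have hη : η ≤ min r 1 := max_le hU (min_le_left _ _)
  have hη0 : 0 < η := lt_max_of_lt_right (lt_min (lt_min hr zero_lt_one)
    (ENNReal.rpow_pos_of_nonneg hε (inv_nonneg.2 hs.le)))
  refine (hausdorffPre_prod_Icc_le hs.le hη0 (hη.trans (min_le_right _ _)) (le_max_left _ _)
    (hη.trans (min_le_left _ _)) a).trans ?_
  gcongr
  rw [(ENNReal.monotone_rpow_of_nonneg hs.le).map_max]
  refine max_le le_self_add (le_add_left ?_)
  calc min (min r 1) (ε ^ s⁻¹) ^ s ≤ (ε ^ s⁻¹) ^ s :=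
        ENNReal.rpow_le_rpow (min_le_right _ _) hs.le
    _ = ε := ENNReal.rpow_inv_rpow hs.ne' ε

theorem hausdorffMeasure_prod_Icc_le {s : ℝ} (hs : 0 < s) (A : Set (EuclideanSpace ℝ (Fin n)))
    (a : ℝ) : μH[s + 2] (prod A (Icc a (a + 1))) ≤ 2 * μH[s] A := by
  rw [hausdorffMeasure_eq_iSup_hausdorffPre]
  refine iSup₂_le fun r hr => ENNReal.le_of_forall_pos_le_add fun ε hε hfin => ?_
  have hε4 : (0 : ℝ≥0∞) < ε / 4 := ENNReal.div_pos (by exact_mod_cast hε.ne') (by norm_num)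
  have hAfin : μH[s] A ≠ ⊤ := fun h => by simp [h] at hfin
  obtain ⟨U, hAU, hUr, hUsum⟩ := exists_cover_tsum_ediam_rpow_lt hs (lt_min hr zero_lt_one)
    (ENNReal.lt_add_right hAfin hε4.ne')
  obtain ⟨δ, hδ0, hδsum⟩ := ENNReal.exists_pos_sum_of_countable' hε4.ne' ℕ
  calc hausdorffPre (s + 2) r (prod A (Icc a (a + 1)))
      ≤ ∑' i, hausdorffPre (s + 2) r (prod (U i) (Icc a (a + 1))) := by
        refine (measure_mono fun p hp => ?_).trans (measure_iUnion_le _)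
        obtain ⟨i, hi⟩ := mem_iUnion.1 (hAU hp.1)
        exact mem_iUnion.2 ⟨i, hi, hp.2⟩
    _ ≤ ∑' i, 2 * (ediam (U i) ^ s + δ i) := ENNReal.tsum_le_tsum fun i =>
        hausdorffPre_prod_Icc_le_add hs hr (hUr i) (hδ0 i) a
    _ = 2 * (∑' i, ediam (U i) ^ s + ∑' i, δ i) := by
        rw [ENNReal.tsum_mul_left, ENNReal.tsum_add]
    _ ≤ 2 * (μH[s] A + ε / 4 + ε / 4) := by gcongr
    _ = 2 * μH[s] A + ε := by
        rw [add_assoc, mul_add, ← two_mul, ← mul_assoc, show (2 : ℝ≥0∞) * 2 = 4 by norm_num,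
          ENNReal.mul_div_cancel' (by norm_num) (by norm_num)]

theorem hausdorffMeasure_prod_univ_eq_zero {s : ℝ} (hs : 0 < s)
    {A : Set (EuclideanSpace ℝ (Fin n))} (hA : μH[s] A = 0) : μH[s + 2] (prod A univ) = 0 := by
  have hcover : prod A univ ⊆ ⋃ k : ℤ, prod A (Icc k (k + 1)) := fun p hp =>
    mem_iUnion.2 ⟨⌊p.t⌋, hp.1, Int.floor_le _, (Int.lt_floor_add_one _).le⟩
  refine measure_mono_null hcover (measure_iUnion_null fun k => ?_)
  exact le_antisymm ((hausdorffMeasure_prod_Icc_le hs A k).trans_eq (by simp [hA])) zero_le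

theorem mul_volume_le_tsum_ediam_rpow {c : ℝ≥0∞} {s : ℝ} (hs : 0 ≤ s) {T : Set ℝ}
    (hT : MeasurableSet T) {t : ℕ → Set (PP n)}
    (hslice : ∀ τ ∈ T,
      c ≤ ∑' m, ⨆ _ : ((mk · τ) ⁻¹' t m).Nonempty, ediam ((mk · τ) ⁻¹' t m) ^ s) :
    c * volume T ≤ ∑' m, ediam (t m) ^ (s + 2) := by
  set g : ℕ → ℝ → ℝ≥0∞ := fun m => (closure (PP.t '' t m)).indicator fun _ => ediam (t m) ^ s
  have hg : ∀ τ ∈ T, c ≤ ∑' m, g m τ := fun τ hτ => (hslice τ hτ).trans <|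
    ENNReal.tsum_le_tsum fun m => iSup_le fun ⟨x, hx⟩ => by
      have hτm : τ ∈ closure (PP.t '' t m) := subset_closure (mem_image_of_mem PP.t hx)
      rw [show g m τ = ediam (t m) ^ s from indicator_of_mem hτm _]
      exact ENNReal.rpow_le_rpow (ediam_preimage_mk_le _ _) hs
  have hgm (m : ℕ) : ∫⁻ τ, g m τ ≤ ediam (t m) ^ (s + 2) := by
    rw [lintegral_indicator_const isClosed_closure.measurableSet,
      ENNReal.rpow_add_of_nonneg _ _ hs zero_le_two]
    exact mul_le_mul_right (volume_closure_image_t_le _) _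
  calc c * volume T = ∫⁻ _ in T, c := (setLIntegral_const T c).symm
    _ ≤ ∫⁻ τ in T, ∑' m, g m τ := setLIntegral_mono' hT hg
    _ ≤ ∫⁻ τ, ∑' m, g m τ := setLIntegral_le_lintegral _ _
    _ = ∑' m, ∫⁻ τ, g m τ := lintegral_tsum fun m =>
        (measurable_const.indicator isClosed_closure.measurableSet).aemeasurable
    _ ≤ ∑' m, ediam (t m) ^ (s + 2) := ENNReal.tsum_le_tsum hgm

theorem hausdorffMeasure_mul_volume_le {s : ℝ} (hs : 0 ≤ s)
    (A : Set (EuclideanSpace ℝ (Fin n))) {T : Set ℝ} (hT : MeasurableSet T) :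
    μH[s] A * volume T ≤ μH[s + 2] (prod A T) := by
  simp only [Measure.hausdorffMeasure_apply, ENNReal.iSup_mul]
  refine iSup₂_mono fun r _ => le_iInf₂ fun t hcov => le_iInf fun hdiam => ?_
  rw [tsum_congr fun m => iSup_nonempty_ediam_rpow (by linarith) (t m)]
  refine mul_volume_le_tsum_ediam_rpow hs hT fun τ hτ =>
    iInf_le_of_le (fun m => (mk · τ) ⁻¹' t m) (iInf_le_of_le ?_ (iInf_le_of_le ?_ le_rfl))
  · exact fun x hx => mem_iUnion.1 (hcov ⟨hx, hτ⟩) |>.elim fun m hm => mem_iUnion.2 ⟨m, hm⟩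
  · exact fun m => (ediam_preimage_mk_le _ _).trans (hdiam m)

theorem hausdorffMeasure_prod_univ_eq_top {s : ℝ} (hs : 0 ≤ s)
    {A : Set (EuclideanSpace ℝ (Fin n))} (hA : μH[s] A ≠ 0) : μH[s + 2] (prod A univ) = ⊤ :=
  top_unique <| (ENNReal.mul_top hA).symm.trans_le <| Real.volume_univ ▸
    hausdorffMeasure_mul_volume_le hs A MeasurableSet.univ

end PP

theorem dimH_prod_time_axis_general (n : ℕ)
    (A : Set (EuclideanSpace ℝ (Fin n))) (hA : A.Nonempty) :
    dimH {p : PP n | p.x ∈ A} = dimH A + 2 := by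
  have hprod : {p : PP n | p.x ∈ A} = PP.prod A univ := by
    rw [PP.prod, preimage_univ, inter_univ]
    rfl
  rw [hprod]
  refine le_antisymm ?_ ?_
  · exact_mod_cast dimH_le_add_of_hausdorffMeasure_eq_zero (c := 2) fun s hs hA0 => by
      exact_mod_cast PP.hausdorffMeasure_prod_univ_eq_zero hs hA0
  · exact_mod_cast add_le_dimH_of_hausdorffMeasure_ne_zero hA (c := 2) fun s hs hA0 => by
      rw [NNReal.coe_ofNat, PP.hausdorffMeasure_prod_univ_eq_top hs hA0]
      exact ENNReal.top_ne_zero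

/-- **Parabolic dimension of a product `A × ℝ`.**
For a nonempty Borel set `A ⊆ ℝⁿ`, the Hausdorff dimension of `A × ℝ ⊆ ℝ^{n+1}` with
respect to the parabolic distance equals `dim_H A + 2`, where `dim_H A` is the (Euclidean)
Hausdorff dimension of `A`. -/
theorem dimH_prod_time_axis (n : ℕ) (hn : 1 ≤ n)
    (A : Set (EuclideanSpace ℝ (Fin n))) (hA : A.Nonempty) (hAm : MeasurableSet A) :
    dimH {p : PP n | p.x ∈ A} = dimH A + 2 :=
  dimH_prod_time_axis_general n A hA
end

section
/- Fix an integer n ≥ 1. Let (X₀,t₀) ∈ ℝ^n × ℝ, let r > 0 and s > 0, and set t₋₁ = t₀ − s − r²/(2n). Then the infimum of W(Y − X₀, τ − t₋₁) over all (Y,τ) in the open cylinder U_{r,s}(X₀,t₀) = {Y ∈ ℝ^n : |Y − X₀| < r} × (t₀ − s, t₀ + s) equals φ(r, r²/(2n) + 2s) = r^{−n} φ(1, 1/(2n) + 2s/r²). -/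
open Set Filter

/-- The fundamental temperature (heat kernel) `W(X,t) = (4πt)^{−n/2} exp(−|X|²/(4t))`
for `t > 0`, and `W(X,t) = 0` for `t ≤ 0`. -/
noncomputable def heatW (n : ℕ) (X : EuclideanSpace ℝ (Fin n)) (t : ℝ) : ℝ :=
  if 0 < t then (4 * Real.pi * t) ^ (-(n : ℝ) / 2) * Real.exp (-(‖X‖ ^ 2) / (4 * t)) else 0

/-- The radial profile `φ(r,t) = (4πt)^{−n/2} exp(−r²/(4t))`. -/
noncomputable def phi (n : ℕ) (r t : ℝ) : ℝ :=
  (4 * Real.pi * t) ^ (-(n : ℝ) / 2) * Real.exp (-(r ^ 2) / (4 * t))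

open Topology

/-! For `τ − t₋₁ ≥ r²/(2n)` the profile `φ(ρ, t)` is decreasing in `ρ ≥ 0` and, because
`∂ₜ log φ = (ρ² − 2nt)/(4t²)`, also decreasing in `t`. Over the cylinder `τ − t₋₁` ranges over
`(r²/(2n), r²/(2n) + 2s)`, so `φ(r, r²/(2n) + 2s)` is a lower bound, approached at the
boundary point `|Y − X₀| = r`, `τ = t₀ + s`. -/

lemma heatW_of_pos (n : ℕ) (X : EuclideanSpace ℝ (Fin n)) {t : ℝ} (ht : 0 < t) :
    heatW n X t = phi n ‖X‖ t := by
  rw [heatW, if_pos ht, phi]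

lemma phi_pos (n : ℕ) (r : ℝ) {t : ℝ} (ht : 0 < t) : 0 < phi n r t := by
  unfold phi
  positivity

lemma log_phi (n : ℕ) (r : ℝ) {t : ℝ} (ht : 0 < t) :
    Real.log (phi n r t) = -(n / 2) * Real.log (4 * Real.pi * t) - r ^ 2 / (4 * t) := by
  rw [phi, Real.log_mul (by positivity) (Real.exp_ne_zero _), Real.log_rpow (by positivity),
    Real.log_exp]
  ring

lemma phi_le_phi_of_le_radius (n : ℕ) {ρ r t : ℝ} (ht : 0 < t) (hρ : 0 ≤ ρ) (h : ρ ≤ r) :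
    phi n r t ≤ phi n ρ t := by
  unfold phi
  gcongr

lemma phi_le_phi_of_le_time (n : ℕ) {r t₁ t₂ : ℝ} (ht₁ : 0 < t₁) (h : t₁ ≤ t₂)
    (hr : r ^ 2 ≤ 2 * n * t₁) : phi n r t₂ ≤ phi n r t₁ := by
  have ht₂ : 0 < t₂ := ht₁.trans_le h
  rw [← Real.log_le_log_iff (phi_pos n r ht₂) (phi_pos n r ht₁), log_phi n r ht₁, log_phi n r ht₂,
    Real.log_mul (by positivity) ht₁.ne', Real.log_mul (by positivity) ht₂.ne']
  have hlog : 1 - t₁ / t₂ ≤ Real.log t₂ - Real.log t₁ := by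
    simpa [Real.log_div ht₂.ne' ht₁.ne'] using Real.one_sub_inv_le_log_of_pos (div_pos ht₂ ht₁)
  have hgauss : r ^ 2 / (4 * t₁) - r ^ 2 / (4 * t₂) ≤ n / 2 * (1 - t₁ / t₂) := by
    calc r ^ 2 / (4 * t₁) - r ^ 2 / (4 * t₂) = r ^ 2 * (t₂ - t₁) / (4 * t₁ * t₂) := by
          field_simp
      _ ≤ (2 * n * t₁) * (t₂ - t₁) / (4 * t₁ * t₂) := by gcongr
      _ = n / 2 * (1 - t₁ / t₂) := by field_simp; ring
  have := mul_le_mul_of_nonneg_left hlog (by positivity : (0 : ℝ) ≤ n / 2)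
  linarith

lemma phi_sq_mul (n : ℕ) {r : ℝ} (hr : 0 < r) {u : ℝ} (hu : 0 < u) :
    phi n r (r ^ 2 * u) = r ^ (-(n : ℝ)) * phi n 1 u := by
  have hpow : (r ^ 2) ^ (-(n : ℝ) / 2) = r ^ (-(n : ℝ)) := by
    rw [← Real.rpow_natCast, ← Real.rpow_mul hr.le]
    ring_nf
  rw [phi, phi, show 4 * Real.pi * (r ^ 2 * u) = r ^ 2 * (4 * Real.pi * u) by ring,
    Real.mul_rpow (by positivity) (by positivity), hpow,
    show -r ^ 2 / (4 * (r ^ 2 * u)) = -1 ^ 2 / (4 * u) by field_simp]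
  ring

lemma continuousAt_phi (n : ℕ) {p : ℝ × ℝ} (hp : 0 < p.2) :
    ContinuousAt (fun q : ℝ × ℝ => phi n q.1 q.2) p := by
  have hp' : 4 * Real.pi * p.2 ≠ 0 := (mul_pos (by positivity) hp).ne'
  unfold phi
  exact ((continuousAt_snd.const_mul _).rpow_const (.inl hp')).mul
    (Real.continuous_exp.continuousAt.comp
      ((continuousAt_fst.pow 2).neg.div (continuousAt_snd.const_mul _) (by simpa using hp.ne')))

lemma exists_norm_eq_of_one_le {n : ℕ} (hn : 1 ≤ n) {ρ : ℝ} (hρ : 0 ≤ ρ) :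
    ∃ X : EuclideanSpace ℝ (Fin n), ‖X‖ = ρ :=
  ⟨EuclideanSpace.single ⟨0, hn⟩ ρ, by simp [abs_of_nonneg hρ]⟩

theorem sInf_heatW_cylinder_eq_phi {n : ℕ} (hn : 1 ≤ n) (X₀ : EuclideanSpace ℝ (Fin n))
    {t₀ r s c : ℝ} (hr : 0 < r) (hs : 0 < s) (hc : c + r ^ 2 / (2 * n) ≤ t₀ - s) :
    sInf ((fun p : EuclideanSpace ℝ (Fin n) × ℝ => heatW n (p.1 - X₀) (p.2 - c)) ''
        {p : EuclideanSpace ℝ (Fin n) × ℝ |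
          ‖p.1 - X₀‖ < r ∧ p.2 ∈ Set.Ioo (t₀ - s) (t₀ + s)})
      = phi n r (t₀ + s - c) := by
  set S := (fun p : EuclideanSpace ℝ (Fin n) × ℝ => heatW n (p.1 - X₀) (p.2 - c)) ''
    {p : EuclideanSpace ℝ (Fin n) × ℝ | ‖p.1 - X₀‖ < r ∧ p.2 ∈ Set.Ioo (t₀ - s) (t₀ + s)}
  have hn' : (0 : ℝ) < n := by exact_mod_cast hn
  have hr' : r ^ 2 = 2 * n * (r ^ 2 / (2 * n)) := by field_simp
  have ha : 0 < r ^ 2 / (2 * n) := by positivity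
  have hlower : ∀ v ∈ S, phi n r (t₀ + s - c) ≤ v := by
    rintro _ ⟨⟨Y, τ⟩, ⟨hY, hτ₁, hτ₂⟩, rfl⟩
    have hτ : 0 < τ - c := by linarith
    calc phi n r (t₀ + s - c) ≤ phi n r (τ - c) :=
          phi_le_phi_of_le_time n hτ (by linarith) (by rw [hr']; gcongr; linarith)
      _ ≤ phi n ‖Y - X₀‖ (τ - c) := phi_le_phi_of_le_radius n hτ (norm_nonneg _) hY.le
      _ = heatW n (Y - X₀) (τ - c) := (heatW_of_pos n _ hτ).symm
  have hmem : ∀ ρ ∈ Set.Ico 0 r, ∀ τ ∈ Set.Ioo (t₀ - s) (t₀ + s), phi n ρ (τ - c) ∈ S := by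
    rintro ρ ⟨hρ₀, hρ⟩ τ hτ
    obtain ⟨X, hX⟩ := exists_norm_eq_of_one_le hn hρ₀
    refine ⟨(X₀ + X, τ), ⟨by simpa [hX] using hρ, hτ⟩, ?_⟩
    dsimp only
    rw [add_sub_cancel_left, heatW_of_pos n X (show 0 < τ - c by linarith [hτ.1]), hX]
  have hlim : Tendsto (fun u => phi n (r * u) (t₀ + s * u - c)) (𝓝[<] 1)
      (𝓝 (phi n r (t₀ + s - c))) := by
    have hcont : ContinuousAt (fun u => phi n (r * u) (t₀ + s * u - c)) 1 :=
      (continuousAt_phi n (p := (r, t₀ + s - c)) (show 0 < t₀ + s - c by linarith)).comp_of_eq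
        (f := fun u : ℝ => (r * u, t₀ + s * u - c)) (by fun_prop) (by simp)
    simpa using hcont.tendsto.mono_left nhdsWithin_le_nhds
  refine le_antisymm (ge_of_tendsto hlim ?_) (le_csInf ⟨_, hmem 0 ⟨le_rfl, hr⟩ t₀
    ⟨by linarith, by linarith⟩⟩ hlower)
  filter_upwards [Ioo_mem_nhdsLT one_pos] with u ⟨hu₀, hu₁⟩
  exact csInf_le ⟨_, hlower⟩ (hmem _ ⟨by positivity, by nlinarith⟩ _
    ⟨by nlinarith, by nlinarith⟩)

/-- **Infimum of the translated heat kernel over an open cylinder.**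
With `t₋₁ = t₀ − s − r²/(2n)`, the infimum of `W(Y − X₀, τ − t₋₁)` over
`(Y,τ) ∈ U_{r,s}(X₀,t₀) = {|Y − X₀| < r} × (t₀ − s, t₀ + s)` equals
`φ(r, r²/(2n) + 2s) = r^{−n} φ(1, 1/(2n) + 2s/r²)`. -/
theorem sInf_heatW_cylinder (n : ℕ) (hn : 1 ≤ n)
    (X₀ : EuclideanSpace ℝ (Fin n)) (t₀ : ℝ) (r s : ℝ) (hr : 0 < r) (hs : 0 < s) :
    sInf ((fun p : EuclideanSpace ℝ (Fin n) × ℝ =>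
          heatW n (p.1 - X₀) (p.2 - (t₀ - s - r ^ 2 / (2 * n)))) ''
        {p : EuclideanSpace ℝ (Fin n) × ℝ |
          ‖p.1 - X₀‖ < r ∧ p.2 ∈ Set.Ioo (t₀ - s) (t₀ + s)})
      = phi n r (r ^ 2 / (2 * n) + 2 * s) ∧
    phi n r (r ^ 2 / (2 * n) + 2 * s)
      = r ^ (-(n : ℝ)) * phi n 1 (1 / (2 * n) + 2 * s / r ^ 2) := by
  refine ⟨?_, ?_⟩
  · rw [sInf_heatW_cylinder_eq_phi hn X₀ hr hs (by linarith)]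
    ring_nf
  · rw [← phi_sq_mul n hr (by positivity)]
    congr 1
    field_simp
end

section
/- Potential upper bound away from the support (E3): Fix an integer n ≥ 1, let ε, δ > 0 satisfy ε/δ ≤ 1/√(6n), and let r > 0. Let K ⊆ ℝ^{n+1} be compact and let μ be a finite Borel measure on ℝ^{n+1} with support contained in K. Suppose (X,t) ∈ ℝ^{n+1} satisfies, for every (Y,s) ∈ K, max(|X − Y|, |t − s|^{1/2}) ≥ δr and t − s ≤ 3ε²r². Then the potential u(X,t) = ∫_K W(X−Y, t−s) dμ(Y,s) satisfies u(X,t) ≤ (12π)^{−n/2} e^{−n/2} (εr)^{−n} μ(K). -/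
open Set MeasureTheory

/-!
For `τ ≤ 0` the kernel vanishes. For `τ > 0` the hypotheses force the point to be far in space:
`√τ ≤ √3 ε r < δ r`, so the parabolic distance `δ r` is attained by `|X − Y|`, and
`|X − Y|² ≥ δ²r² ≥ 6n ε²r²`. Maximising `τ ↦ W(Z, τ)` for fixed `Z` gives
`W(Z, τ) ≤ (2π|Z|²/n)^{−n/2} e^{−n/2}`; integrating this pointwise bound over `K` gives the
claim.
-/

namespace Real

lemma rpow_mul_exp_neg_le {x m : ℝ} (hx : 0 ≤ x) (hm : 0 < m) :
    x ^ m * exp (-x) ≤ m ^ m * exp (-m) := by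
  have hlin : x / m ≤ exp (x / m - 1) := by linarith [add_one_le_exp (x / m - 1)]
  have hpow : x ^ m / m ^ m ≤ exp (x - m) := by
    calc x ^ m / m ^ m = (x / m) ^ m := (div_rpow hx hm.le m).symm
      _ ≤ exp (x / m - 1) ^ m := rpow_le_rpow (by positivity) hlin hm.le
      _ = exp (x - m) := by rw [← exp_mul]; field_simp
  rw [div_le_iff₀ (by positivity), exp_sub] at hpow
  calc x ^ m * exp (-x) ≤ exp x / exp m * m ^ m * exp (-x) := by gcongr
    _ = m ^ m * exp (-m) := by rw [exp_neg, exp_neg]; field_simp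

lemma mul_sq_le_sq_of_div_le_one_div_sqrt {c ε δ : ℝ} (hc : 0 < c) (hε : 0 ≤ ε) (hδ : 0 < δ)
    (h : ε / δ ≤ 1 / √c) : c * ε ^ 2 ≤ δ ^ 2 := by
  have hεδ : ε * √c ≤ δ := by
    rwa [div_le_div_iff₀ hδ (sqrt_pos.mpr hc), one_mul] at h
  calc c * ε ^ 2 = (ε * √c) ^ 2 := by rw [mul_pow, sq_sqrt hc.le, mul_comm]
    _ ≤ δ ^ 2 := by gcongr

end Real

open Real

lemma heatW_nonneg (n : ℕ) (Z : EuclideanSpace ℝ (Fin n)) (τ : ℝ) : 0 ≤ heatW n Z τ := by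
  unfold heatW; split_ifs <;> positivity

lemma heatW_of_nonpos (n : ℕ) (Z : EuclideanSpace ℝ (Fin n)) {τ : ℝ} (hτ : τ ≤ 0) :
    heatW n Z τ = 0 := by
  simp [heatW, not_lt.mpr hτ]

lemma heatW_le (n : ℕ) (hn : 1 ≤ n) {Z : EuclideanSpace ℝ (Fin n)} (hZ : Z ≠ 0) (τ : ℝ) :
    heatW n Z τ ≤ (2 * π * ‖Z‖ ^ 2 / n) ^ (-(n : ℝ) / 2) * exp (-(n : ℝ) / 2) := by
  unfold heatW
  split_ifs with hτ
  swap
  · positivity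
  have hZ' : 0 < ‖Z‖ := norm_pos_iff.mpr hZ
  have hm : 0 < (n : ℝ) / 2 := by
    have : (0 : ℝ) < n := by exact_mod_cast hn
    positivity
  set m := (n : ℝ) / 2
  set a := π * ‖Z‖ ^ 2
  set x := ‖Z‖ ^ 2 / (4 * τ)
  have ha : 0 < a := by positivity
  have hx : 0 < x := by positivity
  -- in the variable `x = ‖Z‖²/(4τ)` the kernel is `a^{-m} x^m e^{-x}`, maximal at `x = m`
  have hkernel : (4 * π * τ) ^ (-m) = x ^ m / a ^ m := by
    rw [show 4 * π * τ = a / x by simp only [a, x]; field_simp, rpow_neg (by positivity),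
      ← inv_rpow (by positivity), inv_div, div_rpow hx.le ha.le]
  have hmax : (2 * π * ‖Z‖ ^ 2 / n) ^ (-m) = m ^ m / a ^ m := by
    rw [show 2 * π * ‖Z‖ ^ 2 / n = a / m by simp only [a, m]; field_simp, rpow_neg (by positivity),
      ← inv_rpow (by positivity), inv_div, div_rpow hm.le ha.le]
  rw [show -(n : ℝ) / 2 = -m by ring, hkernel, hmax, neg_div]
  calc x ^ m / a ^ m * exp (-x) = x ^ m * exp (-x) / a ^ m := by ring
    _ ≤ m ^ m * exp (-m) / a ^ m :=
        div_le_div_of_nonneg_right (rpow_mul_exp_neg_le hx.le hm) (by positivity)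
    _ = m ^ m / a ^ m * exp (-m) := by ring

lemma heatW_le_of_mul_le_sq_norm (n : ℕ) (hn : 1 ≤ n) {Z : EuclideanSpace ℝ (Fin n)} {b : ℝ}
    (hb : 0 < b) (hZ : n * b ≤ ‖Z‖ ^ 2) (τ : ℝ) :
    heatW n Z τ ≤ (2 * π * b) ^ (-(n : ℝ) / 2) * exp (-(n : ℝ) / 2) := by
  have hn' : (0 : ℝ) < n := by exact_mod_cast hn
  have hZ0 : Z ≠ 0 := by
    rintro rfl
    rw [norm_zero, zero_pow two_ne_zero] at hZ
    nlinarith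
  refine (heatW_le n hn hZ0 τ).trans (mul_le_mul_of_nonneg_right ?_ (exp_pos _).le)
  exact rpow_le_rpow_of_nonpos (by positivity)
    (by rw [le_div_iff₀ hn']; nlinarith [pi_pos]) (by linarith)

lemma six_mul_sq_le_sq_of_le_max_sqrt {n ε δ r d τ : ℝ} (hn : 1 ≤ n) (hr : 0 ≤ r)
    (hδ : 0 ≤ δ) (hεδ : 6 * n * ε ^ 2 ≤ δ ^ 2) (hτ : 0 ≤ τ) (hτr : τ ≤ 3 * ε ^ 2 * r ^ 2)
    (hd : δ * r ≤ max d √τ) : 6 * n * (ε * r) ^ 2 ≤ d ^ 2 := by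
  have hδr : 6 * n * (ε * r) ^ 2 ≤ (δ * r) ^ 2 := by
    rw [mul_pow, mul_pow, ← mul_assoc]; gcongr
  rcases le_max_iff.mp hd with hspace | htime
  · exact hδr.trans (pow_le_pow_left₀ (by positivity) hspace 2)
  · -- the time direction cannot realise the distance: `τ ≤ 3 ε²r² < 6n ε²r² ≤ δ²r²`
    have : (δ * r) ^ 2 ≤ τ := (le_sqrt (by positivity) hτ).mp htime
    nlinarith

theorem potential_upper_bound_E3_general (n : ℕ) (hn : 1 ≤ n)
    (ε δ : ℝ) (hε : 0 < ε) (hδ : 0 < δ) (hratio : ε / δ ≤ 1 / Real.sqrt (6 * n))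
    (r : ℝ) (hr : 0 < r)
    (K : Set (EuclideanSpace ℝ (Fin n) × ℝ))
    (μ : Measure (EuclideanSpace ℝ (Fin n) × ℝ)) [IsFiniteMeasure μ]
    (X : EuclideanSpace ℝ (Fin n)) (t : ℝ)
    (h : ∀ p ∈ K, δ * r ≤ max ‖X - p.1‖ (Real.sqrt |t - p.2|) ∧
      t - p.2 ≤ 3 * ε ^ 2 * r ^ 2) :
    ∫ p in K, heatW n (X - p.1) (t - p.2) ∂μ
      ≤ (12 * Real.pi) ^ (-(n : ℝ) / 2) * Real.exp (-(n : ℝ) / 2)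
          * (ε * r) ^ (-(n : ℝ)) * (μ K).toReal := by
  have hn' : (1 : ℝ) ≤ n := by exact_mod_cast hn
  have hεδ : 6 * n * ε ^ 2 ≤ δ ^ 2 :=
    mul_sq_le_sq_of_div_le_one_div_sqrt (by positivity) hε.le hδ hratio
  have hconst : (2 * π * (6 * (ε * r) ^ 2)) ^ (-(n : ℝ) / 2) * exp (-(n : ℝ) / 2)
      = (12 * π) ^ (-(n : ℝ) / 2) * exp (-(n : ℝ) / 2) * (ε * r) ^ (-(n : ℝ)) := by
    rw [← mul_assoc, show 2 * π * 6 = 12 * π by ring, mul_rpow (by positivity) (by positivity),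
      ← rpow_natCast (ε * r) 2, ← rpow_mul (by positivity)]
    push_cast; ring_nf
  have hbound : ∀ p ∈ K, ‖heatW n (X - p.1) (t - p.2)‖
      ≤ (12 * π) ^ (-(n : ℝ) / 2) * exp (-(n : ℝ) / 2) * (ε * r) ^ (-(n : ℝ)) := by
    intro p hp
    obtain ⟨hfar, hpast⟩ := h p hp
    rw [norm_of_nonneg (heatW_nonneg _ _ _)]
    rcases le_or_gt (t - p.2) 0 with hτ | hτ
    · rw [heatW_of_nonpos _ _ hτ]; positivity
    · rw [abs_of_pos hτ] at hfar
      have hspace := six_mul_sq_le_sq_of_le_max_sqrt hn' hr.le hδ.le hεδ hτ.le hpast hfar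
      rw [← hconst]
      exact heatW_le_of_mul_le_sq_norm n hn (by positivity) (by linarith) _
  exact (le_abs_self _).trans (norm_setIntegral_le_of_norm_le_const (measure_lt_top μ K) hbound)

/-- **Potential upper bound away from the support (E3).**
Fix `n ≥ 1`, `ε, δ > 0` with `ε/δ ≤ 1/√(6n)`, and `r > 0`.  Let `K` be compact, `μ` a
finite Borel measure supported in `K`.  If `(X,t)` satisfies, for every `(Y,s) ∈ K`,
`max(|X − Y|, |t − s|^{1/2}) ≥ δr` and `t − s ≤ 3ε²r²`, then
`u(X,t) = ∫_K W(X−Y, t−s) dμ(Y,s) ≤ (12π)^{−n/2} e^{−n/2} (εr)^{−n} μ(K)`. -/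
theorem potential_upper_bound_E3 (n : ℕ) (hn : 1 ≤ n)
    (ε δ : ℝ) (hε : 0 < ε) (hδ : 0 < δ) (hratio : ε / δ ≤ 1 / Real.sqrt (6 * n))
    (r : ℝ) (hr : 0 < r)
    (K : Set (EuclideanSpace ℝ (Fin n) × ℝ)) (hK : IsCompact K)
    (μ : Measure (EuclideanSpace ℝ (Fin n) × ℝ)) [IsFiniteMeasure μ] (hsupp : μ Kᶜ = 0)
    (X : EuclideanSpace ℝ (Fin n)) (t : ℝ)
    (h : ∀ p ∈ K, δ * r ≤ max ‖X - p.1‖ (Real.sqrt |t - p.2|) ∧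
      t - p.2 ≤ 3 * ε ^ 2 * r ^ 2) :
    ∫ p in K, heatW n (X - p.1) (t - p.2) ∂μ
      ≤ (12 * Real.pi) ^ (-(n : ℝ) / 2) * Real.exp (-(n : ℝ) / 2)
          * (ε * r) ^ (-(n : ℝ)) * (μ K).toReal :=
  potential_upper_bound_E3_general n hn ε δ hε hδ hratio r hr K μ X t h
end
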